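/- If G is a right-linear context-free grammar, then for any stack congruence ≡ on R(G) the flattening F_≡ accepts exactly L(G); in particular, the flattening of R(G) itself (obtained with the trivial coarsest congruence, i.e., without any unfolding) accepts exactly L(G), so unfolding does not change the accepted language for right-linear grammars. -/

import Mathlib

/-!
Infrastructure for finite-state approximation of context-free grammars
(Pereira & Wright). We use Mathlib's `ContextFreeGrammar`.

A dotted rule `A → α · β` is represented as `(some A, α, β)`;
the auxiliary dotted rules `S' → · S` and `S' → S ·` are represented with
first component `none`.  States of the LR(0) characteristic machine `M(G)`
are sets of dotted rules (the determinization by the subset construction);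
the transition function `next` is total, with the empty set `∅` playing the
role of "undefined", so genuine transitions are those with nonempty target.
-/

namespace LRApprox

/-- Context-free grammar as in the older Mathlib (`ContextFreeGrammar.{uN,uT}`), whose
type of nonterminals lives in an arbitrary universe. -/
structure CFGrammar.{u, v} (T : Type v) where
  /-- Type of nonterminals. -/
  NT : Type u
  /-- Initial nonterminal. -/
  initial : NT
  /-- Rewrite rules. -/
  rules : Finset (ContextFreeRule T NT)

/-- One step of context-free transformation. -/
def CFGrammar.Produces.{u, v} {T : Type v} (g : CFGrammar.{u, v} T)
    (x y : List (Symbol T g.NT)) : Prop :=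
  ∃ r ∈ g.rules, r.Rewrites x y

/-- Any number of steps of context-free transformation. -/
abbrev CFGrammar.Derives.{u, v} {T : Type v} (g : CFGrammar.{u, v} T) :
    List (Symbol T g.NT) → List (Symbol T g.NT) → Prop :=
  Relation.ReflTransGen g.Produces

/-- The language generated by the grammar. -/
def CFGrammar.language.{u, v} {T : Type v} (g : CFGrammar.{u, v} T) : Language T :=
  { w : List T | g.Derives [Symbol.nonterminal g.initial] (w.map Symbol.terminal) }

universe uN uT

variable {T : Type uT}

/-- A dotted rule `A → α · β`; `none` as first component stands for the
auxiliary start symbol `S'`. -/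
abbrev DottedRule (g : CFGrammar.{uN} T) : Type _ :=
  Option g.NT × List (Symbol T g.NT) × List (Symbol T g.NT)

/-- A state of the characteristic machine `M(G)`: a set of dotted rules. -/
abbrev LRState (g : CFGrammar.{uN} T) : Type _ := Set (DottedRule g)

/-- Closure of a set of dotted rules: whenever `A → α · B β` is present and
`B → γ` is a rule, add `B → · γ`. -/
inductive Closure (g : CFGrammar.{uN} T) (R : Set (DottedRule g)) :
    DottedRule g → Prop
  | base {d : DottedRule g} : d ∈ R → Closure g R d
  | step {A : Option g.NT} {α β : List (Symbol T g.NT)} {B : g.NT}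
      (r : ContextFreeRule T g.NT) :
      Closure g R (A, α, Symbol.nonterminal B :: β) →
      r ∈ g.rules → r.input = B → Closure g R (some B, [], r.output)

/-- The transition function `δ` of `M(G)`: shift the dot over `X` and take the
closure.  The empty set plays the role of "undefined". -/
def next (g : CFGrammar.{uN} T) (s : LRState g) (X : Symbol T g.NT) : LRState g :=
  {d | Closure g {d' | ∃ A α β, (A, α, X :: β) ∈ s ∧ d' = (A, α ++ [X], β)} d}

/-- The start state `s₀` of `M(G)`: the closure of `{S' → · S}`. -/
def start (g : CFGrammar.{uN} T) : LRState g :=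
  {d | Closure g {(none, [], [Symbol.nonterminal g.initial])} d}

/-- The dotted rule `S' → S ·`. -/
def finalDR (g : CFGrammar.{uN} T) : DottedRule g :=
  (none, [Symbol.nonterminal g.initial], [])

/-- A state is final iff it contains `S' → S ·`. -/
def IsFinal (g : CFGrammar.{uN} T) (s : LRState g) : Prop := finalDR g ∈ s

/-- Iterated transition function, extended to strings of symbols. -/
def nextStar (g : CFGrammar.{uN} T) (s : LRState g)
    (α : List (Symbol T g.NT)) : LRState g :=
  α.foldl (next g) s

/-- A stack of the shift-reduce recognizer: a sequence of (state, symbol) pairs. -/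
abbrev Stack (g : CFGrammar.{uN} T) : Type _ :=
  List (LRState g × Symbol T g.NT)

/-- `Stacks g s σ` iff `σ = ⟨q₀,X₀⟩…⟨q_k,X_k⟩` with `q₀ = s₀`,
`q_i = δ(q_{i-1},X_{i-1})` and `s = δ(q_k,X_k)`; in addition `Stacks s₀`
contains the empty sequence. -/
inductive Stacks (g : CFGrammar.{uN} T) : LRState g → Stack g → Prop
  | nil : Stacks g (start g) []
  | snoc {q : LRState g} {σ : Stack g} {X : Symbol T g.NT} :
      Stacks g q σ → next g q X ≠ ∅ → Stacks g (next g q X) (σ ++ [(q, X)])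

/-- A configuration `⟨s, σ, w⟩` of the shift-reduce recognizer `R(G)`. -/
structure Cfg (g : CFGrammar.{uN} T) where
  state : LRState g
  stack : Stack g
  input : List T

/-- A shift move of `R(G)`. -/
inductive ShiftStep (g : CFGrammar.{uN} T) : Cfg g → Cfg g → Prop
  | shift {s : LRState g} {σ : Stack g} {x : T} {w : List T} :
      next g s (Symbol.terminal x) ≠ ∅ →
      ShiftStep g ⟨s, σ, x :: w⟩
        ⟨next g s (Symbol.terminal x), σ ++ [(s, Symbol.terminal x)], w⟩

/-- A reduce move of `R(G)`. -/
inductive ReduceStep (g : CFGrammar.{uN} T) : Cfg g → Cfg g → Prop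
  | empty {s : LRState g} {σ : Stack g} {w : List T} {A : g.NT} :
      (some A, ([] : List (Symbol T g.NT)), ([] : List (Symbol T g.NT))) ∈ s →
      next g s (Symbol.nonterminal A) ≠ ∅ →
      ReduceStep g ⟨s, σ, w⟩
        ⟨next g s (Symbol.nonterminal A), σ ++ [(s, Symbol.nonterminal A)], w⟩
  | pop {s : LRState g} {σ τ : Stack g} {w : List T} {A : g.NT}
      {s₁ : LRState g} {X₁ : Symbol T g.NT} :
      (some A, ((s₁, X₁) :: τ).map Prod.snd, ([] : List (Symbol T g.NT))) ∈ s →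
      next g s₁ (Symbol.nonterminal A) ≠ ∅ →
      ReduceStep g ⟨s, σ ++ (s₁, X₁) :: τ, w⟩
        ⟨next g s₁ (Symbol.nonterminal A), σ ++ [(s₁, Symbol.nonterminal A)], w⟩

/-- A move of the shift-reduce recognizer `R(G)`. -/
def Step (g : CFGrammar.{uN} T) (c c' : Cfg g) : Prop :=
  ShiftStep g c c' ∨ ReduceStep g c c'

/-- `R(G)` accepts `w`: some sequence of moves leads from the initial
configuration `⟨s₀, ε, w⟩` to a final configuration `⟨s, ⟨s₀,S⟩, ε⟩`, `s ∈ F`. -/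
def RAccepts (g : CFGrammar.{uN} T) (w : List T) : Prop :=
  ∃ s : LRState g, IsFinal g s ∧
    Relation.ReflTransGen (Step g) ⟨start g, [], w⟩
      ⟨s, [(start g, Symbol.nonterminal g.initial)], []⟩

/-- A stack congruence on `R(G)`: a family of equivalence relations on
`Stacks(s)`, compatible with pushing. -/
def IsStackCongruence (g : CFGrammar.{uN} T)
    (E : LRState g → Stack g → Stack g → Prop) : Prop :=
  (∀ s σ σ', E s σ σ' → Stacks g s σ ∧ Stacks g s σ') ∧
  (∀ s σ, Stacks g s σ → E s σ σ) ∧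
  (∀ s σ σ', E s σ σ' → E s σ' σ) ∧
  (∀ s σ₁ σ₂ σ₃, E s σ₁ σ₂ → E s σ₂ σ₃ → E s σ₁ σ₃) ∧
  (∀ s X σ σ', next g s X ≠ ∅ → E s σ σ' →
    E (next g s X) (σ ++ [(s, X)]) (σ' ++ [(s, X)]))

/-- A state of the unfolded recognizer `R_≡`: a state of `M(G)` together with
an equivalence class of stacks (represented as a set of stacks). -/
abbrev UState (g : CFGrammar.{uN} T) : Type _ := LRState g × Set (Stack g)

/-- Transition function `δ_≡` of the unfolded recognizer:
`δ_≡(⟨s,[σ]⟩, X) = ⟨δ(s,X), [σ⟨s,X⟩]⟩`. -/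
def uNext (g : CFGrammar.{uN} T) (E : LRState g → Stack g → Stack g → Prop)
    (p : UState g) (X : Symbol T g.NT) : UState g :=
  (next g p.1 X,
   {τ | Stacks g (next g p.1 X) τ ∧ ∃ σ ∈ p.2, E (next g p.1 X) τ (σ ++ [(p.1, X)])})

/-- Start state `⟨s₀, [ε]⟩` of the unfolded recognizer. -/
def uStart (g : CFGrammar.{uN} T)
    (E : LRState g → Stack g → Stack g → Prop) : UState g :=
  (start g, {τ | Stacks g (start g) τ ∧ E (start g) τ []})

/-- Genuine states of the unfolded recognizer: pairs `⟨s, [σ]_s⟩` with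
`σ ∈ Stacks(s)`. -/
def IsUState (g : CFGrammar.{uN} T)
    (E : LRState g → Stack g → Stack g → Prop) (p : UState g) : Prop :=
  ∃ σ, Stacks g p.1 σ ∧ p.2 = {τ | Stacks g p.1 τ ∧ E p.1 τ σ}

/-- Iterated `δ_≡`, extended to strings of symbols. -/
def uNextStar (g : CFGrammar.{uN} T)
    (E : LRState g → Stack g → Stack g → Prop)
    (p : UState g) (α : List (Symbol T g.NT)) : UState g :=
  α.foldl (uNext g E) p

/-- A configuration of the unfolded recognizer `R_≡`. -/
structure UCfg (g : CFGrammar.{uN} T) where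
  state : UState g
  stack : List (UState g × Symbol T g.NT)
  input : List T

/-- A shift move of the unfolded recognizer. -/
inductive UShiftStep (g : CFGrammar.{uN} T)
    (E : LRState g → Stack g → Stack g → Prop) : UCfg g → UCfg g → Prop
  | shift {p : UState g} {σ : List (UState g × Symbol T g.NT)} {x : T} {w : List T} :
      next g p.1 (Symbol.terminal x) ≠ ∅ →
      UShiftStep g E ⟨p, σ, x :: w⟩
        ⟨uNext g E p (Symbol.terminal x), σ ++ [(p, Symbol.terminal x)], w⟩

/-- A reduce move of the unfolded recognizer. -/
inductive UReduceStep (g : CFGrammar.{uN} T)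
    (E : LRState g → Stack g → Stack g → Prop) : UCfg g → UCfg g → Prop
  | empty {p : UState g} {σ : List (UState g × Symbol T g.NT)} {w : List T} {A : g.NT} :
      (some A, ([] : List (Symbol T g.NT)), ([] : List (Symbol T g.NT))) ∈ p.1 →
      next g p.1 (Symbol.nonterminal A) ≠ ∅ →
      UReduceStep g E ⟨p, σ, w⟩
        ⟨uNext g E p (Symbol.nonterminal A), σ ++ [(p, Symbol.nonterminal A)], w⟩
  | pop {p : UState g} {σ τ : List (UState g × Symbol T g.NT)} {w : List T} {A : g.NT}
      {p₁ : UState g} {X₁ : Symbol T g.NT} :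
      (some A, ((p₁, X₁) :: τ).map Prod.snd, ([] : List (Symbol T g.NT))) ∈ p.1 →
      next g p₁.1 (Symbol.nonterminal A) ≠ ∅ →
      UReduceStep g E ⟨p, σ ++ (p₁, X₁) :: τ, w⟩
        ⟨uNext g E p₁ (Symbol.nonterminal A), σ ++ [(p₁, Symbol.nonterminal A)], w⟩

/-- A move of the unfolded recognizer `R_≡`. -/
def UStep (g : CFGrammar.{uN} T)
    (E : LRState g → Stack g → Stack g → Prop) (c c' : UCfg g) : Prop :=
  UShiftStep g E c c' ∨ UReduceStep g E c c'

/-- The unfolded recognizer `R_≡` accepts `w`. -/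
def UAccepts (g : CFGrammar.{uN} T)
    (E : LRState g → Stack g → Stack g → Prop) (w : List T) : Prop :=
  ∃ p : UState g, IsFinal g p.1 ∧
    Relation.ReflTransGen (UStep g E) ⟨uStart g E, [], w⟩
      ⟨p, [(uStart g E, Symbol.nonterminal g.initial)], []⟩

/-- `Pop(p)`: the unfolded states reachable from `p` by a reduction. -/
def PopSet (g : CFGrammar.{uN} T)
    (E : LRState g → Stack g → Stack g → Prop) (p : UState g) : Set (UState g) :=
  {p' | ∃ (A : g.NT) (α : List (Symbol T g.NT)) (p'' : UState g),
    IsUState g E p'' ∧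
    (some A, α, ([] : List (Symbol T g.NT))) ∈ p.1 ∧
    (some A, ([] : List (Symbol T g.NT)), α) ∈ p''.1 ∧
    uNextStar g E p'' α = p ∧
    next g p''.1 (Symbol.nonterminal A) ≠ ∅ ∧
    uNext g E p'' (Symbol.nonterminal A) = p'}

/-- Paths in the flattening `F_≡` of the unfolded recognizer: terminal
transitions follow `δ_≡` and reductions become ε-transitions. -/
inductive FPath (g : CFGrammar.{uN} T)
    (E : LRState g → Stack g → Stack g → Prop) : UState g → List T → UState g → Prop
  | refl (p : UState g) : FPath g E p [] p
  | shift {p : UState g} {x : T} {w : List T} {q : UState g} :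
      next g p.1 (Symbol.terminal x) ≠ ∅ →
      FPath g E (uNext g E p (Symbol.terminal x)) w q → FPath g E p (x :: w) q
  | eps {p p' : UState g} {w : List T} {q : UState g} :
      p' ∈ PopSet g E p → FPath g E p' w q → FPath g E p w q

/-- The flattening `F_≡` accepts `w`. -/
def FAccepts (g : CFGrammar.{uN} T)
    (E : LRState g → Stack g → Stack g → Prop) (w : List T) : Prop :=
  ∃ q : UState g, IsFinal g q.1 ∧ FPath g E (uStart g E) w q

/-- A stack `⟨s₁,X₁⟩…⟨s_k,X_k⟩` is a loop if `δ(s_k,X_k) = s₁`. -/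
def IsLoop (g : CFGrammar.{uN} T) (τ : Stack g) : Prop :=
  ∃ p q : LRState g × Symbol T g.NT,
    τ.head? = some p ∧ τ.getLast? = some q ∧ next g q.1 q.2 = p.1

/-- A loop is minimal if no proper prefix of it is a loop. -/
def IsMinimalLoop (g : CFGrammar.{uN} T) (τ : Stack g) : Prop :=
  IsLoop g τ ∧ ∀ τ' : Stack g, τ' <+: τ → τ' ≠ τ → ¬ IsLoop g τ'

/-- A stack is collapsible if it contains a loop as a contiguous segment. -/
def Collapsible (g : CFGrammar.{uN} T) (σ : Stack g) : Prop :=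
  ∃ ρ τ υ : Stack g, σ = ρ ++ τ ++ υ ∧ IsLoop g τ

/-- `σ` immediately collapses to `σ'`: remove the earliest minimal loop. -/
def ImmediatelyCollapses (g : CFGrammar.{uN} T) (σ σ' : Stack g) : Prop :=
  ∃ ρ τ υ : Stack g, σ = ρ ++ τ ++ υ ∧ σ' = ρ ++ υ ∧ IsMinimalLoop g τ ∧
    ¬ ∃ ρ' τ' υ' : Stack g, σ = ρ' ++ τ' ++ υ' ∧ ρ' <+: ρ ∧ ρ' ≠ ρ ∧ IsLoop g τ'

/-- `σ` collapses to `σ'` by finitely many immediate collapses. -/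
def Collapses (g : CFGrammar.{uN} T) : Stack g → Stack g → Prop :=
  Relation.ReflTransGen (ImmediatelyCollapses g)

/-- Two stacks are collapsing-equivalent if they collapse to the same
uncollapsible stack. -/
def CollEquiv (g : CFGrammar.{uN} T) (σ σ' : Stack g) : Prop :=
  ∃ τ : Stack g, ¬ Collapsible g τ ∧ Collapses g σ τ ∧ Collapses g σ' τ

/-- The collapsing congruence: the restriction of collapsing equivalence to
the sets `Stacks(s)`. -/
def CollCong (g : CFGrammar.{uN} T) (s : LRState g) (σ σ' : Stack g) : Prop :=
  Stacks g s σ ∧ Stacks g s σ' ∧ CollEquiv g σ σ'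

/-- A CFG is left-linear if every rule has the form `A → Bβ` or `A → β`
with `β` a string of terminals. -/
def LeftLinear (g : CFGrammar.{uN} T) : Prop :=
  ∀ r ∈ g.rules, (∃ β : List T, r.output = β.map Symbol.terminal) ∨
    (∃ (B : g.NT) (β : List T), r.output = Symbol.nonterminal B :: β.map Symbol.terminal)

/-- A CFG is right-linear if every rule has the form `A → βB` or `A → β`
with `β` a string of terminals. -/
def RightLinear (g : CFGrammar.{uN} T) : Prop :=
  ∀ r ∈ g.rules, (∃ β : List T, r.output = β.map Symbol.terminal) ∨
    (∃ (B : g.NT) (β : List T), r.output = β.map Symbol.terminal ++ [Symbol.nonterminal B])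

/-- Reachable (genuine) states of `M(G)`. -/
def ReachableState (g : CFGrammar.{uN} T) (s : LRState g) : Prop :=
  s ≠ ∅ ∧ ∃ α : List (Symbol T g.NT), nextStar g (start g) α = s

end LRApprox

/-!
In a right-linear grammar a nonterminal can only end a rule body. Hence every item valid for
a viable prefix `γ` has empty right context: it is `A → α · β` with `γ = γ₁ α` and
`S ⇒* γ₁ A`, whatever the stack. Two consequences make the flattening exact. First, a state
entered by a nonterminal transition holds only completed items, so once the flattening has
made an ε-move it reads no more input; and the first ε-move, a reduction by `A → α` after
reading a terminal word `u`, already certifies `S ⇒* u`. Second, a derivation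
`S ⇒ β₁ A₁ ⇒ β₁ β₂ A₂ ⇒ ⋯` is traced by reading `β₁ β₂ ⋯` and then popping its chain of
rules, and each of these pops is an ε-move of the flattening for any stack congruence.
-/

namespace LRApprox

variable {T : Type*}

theorem eq_map_terminal_of_append_cons_eq {N : Type*} {p q : List (Symbol T N)} {X : N}
    {u : List T} {Y : Symbol T N}
    (h : p ++ Symbol.nonterminal X :: q = u.map Symbol.terminal ++ [Y]) :
    p = u.map Symbol.terminal ∧ Y = Symbol.nonterminal X ∧ q = [] := by
  rcases q.eq_nil_or_concat' with rfl | ⟨q₀, y, rfl⟩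
  · obtain ⟨hp, hY⟩ := List.append_inj' h rfl
    exact ⟨hp, (List.singleton_inj.mp hY).symm, rfl⟩
  · have h' : (p ++ Symbol.nonterminal X :: q₀) ++ [y] = u.map Symbol.terminal ++ [Y] := by
      simpa using h
    have hu := (List.append_inj' h' rfl).1
    have hX : Symbol.nonterminal X ∈ u.map (Symbol.terminal : T → Symbol T N) := by
      simp [← hu]
    simp at hX

variable {g : CFGrammar T}

theorem RightLinear.eq_nil_of_output_eq (hg : RightLinear g) {r : ContextFreeRule T g.NT}
    (hr : r ∈ g.rules) {α β : List (Symbol T g.NT)} {B : g.NT}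
    (h : r.output = α ++ Symbol.nonterminal B :: β) : β = [] := by
  rcases hg r hr with ⟨c, hc⟩ | ⟨C, c, hc⟩
  · have hB : Symbol.nonterminal B ∈ c.map (Symbol.terminal : T → Symbol T g.NT) := by
      simp [← hc, h]
    simp at hB
  · exact (eq_map_terminal_of_append_cons_eq (h.symm.trans hc)).2.2

theorem produces_append_nonterminal {r : ContextFreeRule T g.NT} (hr : r ∈ g.rules)
    (γ : List (Symbol T g.NT)) :
    g.Produces (γ ++ [Symbol.nonterminal r.input]) (γ ++ r.output) :=
  ⟨r, hr, by simpa using r.rewrites_of_exists_parts γ []⟩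

theorem mem_next_of_mem {s : LRState g} {X : Symbol T g.NT} {A : Option g.NT}
    {α β : List (Symbol T g.NT)} (h : (A, α, X :: β) ∈ s) : (A, α ++ [X], β) ∈ next g s X :=
  Closure.base ⟨A, α, β, h, rfl⟩

theorem next_ne_empty_of_mem {s : LRState g} {X : Symbol T g.NT} {d : DottedRule g}
    (h : d ∈ next g s X) : next g s X ≠ ∅ :=
  Set.nonempty_iff_ne_empty.mp ⟨d, h⟩

theorem nextStar_append (s : LRState g) (α β : List (Symbol T g.NT)) :
    nextStar g s (α ++ β) = nextStar g (nextStar g s α) β :=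
  List.foldl_append

theorem mem_nextStar_of_mem {s : LRState g} {A : Option g.NT} {α β δ : List (Symbol T g.NT)}
    (h : (A, α, δ ++ β) ∈ s) : (A, α ++ δ, β) ∈ nextStar g s δ := by
  induction δ generalizing s α with
  | nil => simpa [nextStar] using h
  | cons X δ ih => simpa [nextStar] using ih (mem_next_of_mem h)

theorem Stacks.eq_nextStar {s : LRState g} {σ : Stack g} (h : Stacks g s σ) :
    s = nextStar g (start g) (σ.map Prod.snd) := by
  induction h with
  | nil => rfl
  | snoc _ _ ih => rw [List.map_append, nextStar_append, ← ih]; rfl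

theorem Stacks.mem_of_predict {s : LRState g} {σ : Stack g} (hs : Stacks g s σ)
    {A : Option g.NT} {α β : List (Symbol T g.NT)} {B : g.NT}
    (h : (A, α, Symbol.nonterminal B :: β) ∈ s) {r : ContextFreeRule T g.NT}
    (hr : r ∈ g.rules) (hin : r.input = B) : (some B, [], r.output) ∈ s := by
  cases hs <;> exact Closure.step r h hr hin

theorem mem_of_closure_of_complete {R : Set (DottedRule g)} (hR : ∀ d ∈ R, d.2.2 = [])
    {d : DottedRule g} (hd : Closure g R d) : d ∈ R := by
  induction hd with
  | base h => exact h
  | step _ _ _ _ ih => exact absurd (hR _ ih) (List.cons_ne_nil _ _)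

theorem eq_shift_of_mem_next {s : LRState g} {X : Symbol T g.NT}
    (hs : ∀ A α β, (A, α, X :: β) ∈ s → β = []) {d : DottedRule g} (hd : d ∈ next g s X) :
    ∃ A α, (A, α, [X]) ∈ s ∧ d = (A, α ++ [X], []) := by
  obtain ⟨A, α, β, h, rfl⟩ :=
    mem_of_closure_of_complete (by rintro _ ⟨A, α, β, h, rfl⟩; exact hs A α β h) hd
  obtain rfl := hs A α β h
  exact ⟨A, α, h, rfl⟩

theorem complete_next {s : LRState g} {X : Symbol T g.NT}
    (hs : ∀ A α β, (A, α, X :: β) ∈ s → β = []) : ∀ d ∈ next g s X, d.2.2 = [] := by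
  intro d hd
  obtain ⟨A, α, -, rfl⟩ := eq_shift_of_mem_next hs hd
  rfl

theorem next_eq_empty_of_complete {s : LRState g} (hs : ∀ d ∈ s, d.2.2 = [])
    (X : Symbol T g.NT) : next g s X = ∅ := by
  refine Set.eq_empty_of_forall_notMem fun d hd => ?_
  obtain ⟨A, α, h, -⟩ :=
    eq_shift_of_mem_next (fun _ _ _ h => absurd (hs _ h) (List.cons_ne_nil _ _)) hd
  exact List.cons_ne_nil _ _ (hs _ h)

/-- LR(0) validity of an item for the viable prefix `γ`, with the right context left out: for
right-linear grammars it is always empty. -/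
def ValidItem (g : CFGrammar T) (γ : List (Symbol T g.NT)) : DottedRule g → Prop
  | (none, α, β) => α ++ β = [Symbol.nonterminal g.initial] ∧ γ = α
  | (some A, α, β) => (∃ r ∈ g.rules, r.input = A ∧ r.output = α ++ β) ∧
      ∃ γ₁, γ = γ₁ ++ α ∧ g.Derives [Symbol.nonterminal g.initial] (γ₁ ++ [Symbol.nonterminal A])

namespace ValidItem

variable {γ : List (Symbol T g.NT)} {A : Option g.NT} {α β : List (Symbol T g.NT)}

theorem shift {X : Symbol T g.NT} (h : ValidItem g γ (A, α, X :: β)) :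
    ValidItem g (γ ++ [X]) (A, α ++ [X], β) := by
  rcases A with _ | A
  · obtain ⟨hαβ, rfl⟩ := h
    exact ⟨by simpa using hαβ, rfl⟩
  · obtain ⟨⟨r, hr, hin, hout⟩, γ₁, rfl, hd⟩ := h
    exact ⟨⟨r, hr, hin, by simpa using hout⟩, γ₁, by simp, hd⟩

theorem eq_nil_of_nonterminal (hg : RightLinear g) {B : g.NT}
    (h : ValidItem g γ (A, α, Symbol.nonterminal B :: β)) : β = [] := by
  rcases A with _ | A
  · obtain ⟨hαβ, -⟩ := h
    exact (eq_map_terminal_of_append_cons_eq (u := []) hαβ).2.2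
  · obtain ⟨⟨r, hr, -, hout⟩, -⟩ := h
    exact hg.eq_nil_of_output_eq hr hout

theorem predict (hg : RightLinear g) {B : g.NT}
    (h : ValidItem g γ (A, α, Symbol.nonterminal B :: β)) {r : ContextFreeRule T g.NT}
    (hr : r ∈ g.rules) (hin : r.input = B) :
    ValidItem g γ (some B, [], r.output) := by
  refine ⟨⟨r, hr, hin, rfl⟩, γ, by simp, ?_⟩
  obtain rfl := h.eq_nil_of_nonterminal hg
  rcases A with _ | A
  · obtain ⟨hαB, rfl⟩ := h
    rw [hαB]
  · obtain ⟨⟨r', hr', rfl, hout⟩, γ₁, rfl, hd⟩ := h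
    simpa [hout] using hd.tail (produces_append_nonterminal hr' γ₁)

theorem derives_of_complete {A : g.NT} (h : ValidItem g γ (some A, α, [])) :
    g.Derives [Symbol.nonterminal g.initial] γ := by
  obtain ⟨⟨r, hr, rfl, hout⟩, γ₁, rfl, hd⟩ := h
  simpa [hout] using hd.tail (produces_append_nonterminal hr γ₁)

theorem eq_of_final (h : ValidItem g γ (finalDR g)) : γ = [Symbol.nonterminal g.initial] :=
  h.2

end ValidItem

theorem validItem_of_closure (hg : RightLinear g) {γ : List (Symbol T g.NT)}
    {R : Set (DottedRule g)} (hR : ∀ d ∈ R, ValidItem g γ d) {d : DottedRule g}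
    (hd : Closure g R d) : ValidItem g γ d := by
  induction hd with
  | base h => exact hR _ h
  | step r _ hr hin ih => exact ih.predict hg hr hin

theorem validItem_of_mem_nextStar (hg : RightLinear g) {γ : List (Symbol T g.NT)}
    {d : DottedRule g} (hd : d ∈ nextStar g (start g) γ) : ValidItem g γ d := by
  induction γ using List.reverseRecOn generalizing d with
  | nil => exact validItem_of_closure hg (by rintro _ rfl; exact ⟨rfl, rfl⟩) hd
  | append_singleton γ X ih =>
    rw [nextStar_append] at hd
    exact validItem_of_closure hg (by rintro _ ⟨A, α, β, h, rfl⟩; exact (ih h).shift) hd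

theorem complete_next_nonterminal (hg : RightLinear g) (γ : List (Symbol T g.NT)) (B : g.NT) :
    ∀ d ∈ next g (nextStar g (start g) γ) (Symbol.nonterminal B), d.2.2 = [] :=
  complete_next fun _ _ _ h => (validItem_of_mem_nextStar hg h).eq_nil_of_nonterminal hg

variable {E : LRState g → Stack g → Stack g → Prop}

theorem uNextStar_fst (p : UState g) (γ : List (Symbol T g.NT)) :
    (uNextStar g E p γ).1 = nextStar g p.1 γ := by
  induction γ generalizing p with
  | nil => rfl
  | cons X γ ih => exact ih (uNext g E p X)

theorem uNextStar_append (p : UState g) (α β : List (Symbol T g.NT)) :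
    uNextStar g E p (α ++ β) = uNextStar g E (uNextStar g E p α) β :=
  List.foldl_append

theorem mem_uNextStar_of_mem {p : UState g} {A : Option g.NT} {α β δ : List (Symbol T g.NT)}
    (h : (A, α, δ ++ β) ∈ p.1) : (A, α ++ δ, β) ∈ (uNextStar g E p δ).1 :=
  uNextStar_fst (E := E) p δ ▸ mem_nextStar_of_mem h

theorem isUState_uStart : IsUState g E (uStart g E) := ⟨[], Stacks.nil, rfl⟩

theorem isUState_uNext (hE : IsStackCongruence g E) {p : UState g} (hp : IsUState g E p)
    {X : Symbol T g.NT} (hne : next g p.1 X ≠ ∅) : IsUState g E (uNext g E p X) := by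
  obtain ⟨-, hrefl, -, htrans, hpush⟩ := hE
  obtain ⟨σ, hσ, hclass⟩ := hp
  refine ⟨σ ++ [(p.1, X)], hσ.snoc hne, Set.ext fun τ => ⟨?_, ?_⟩⟩
  · rintro ⟨hτ, σ₀, hσ₀, hτσ₀⟩
    rw [hclass] at hσ₀
    exact ⟨hτ, htrans _ _ _ _ hτσ₀ (hpush _ _ _ _ hne hσ₀.2)⟩
  · rintro ⟨hτ, hτσ⟩
    exact ⟨hτ, σ, hclass ▸ ⟨hσ, hrefl _ _ hσ⟩, hτσ⟩

theorem isUState_uNextStar (hE : IsStackCongruence g E) {p : UState g} (hp : IsUState g E p)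
    {A : Option g.NT} {α β δ : List (Symbol T g.NT)} (h : (A, α, δ ++ β) ∈ p.1) :
    IsUState g E (uNextStar g E p δ) := by
  induction δ generalizing p α with
  | nil => exact hp
  | cons X δ ih =>
    have hX : (A, α ++ [X], δ ++ β) ∈ (uNext g E p X).1 := mem_next_of_mem h
    exact ih (isUState_uNext hE hp (next_ne_empty_of_mem hX)) hX

theorem complete_uNext_nonterminal (hg : RightLinear g) {p : UState g}
    (hp : IsUState g E p) (A : g.NT) :
    ∀ d ∈ (uNext g E p (Symbol.nonterminal A)).1, d.2.2 = [] := by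
  obtain ⟨σ, hσ, -⟩ := hp
  rw [uNext, hσ.eq_nextStar]
  exact complete_next_nonterminal hg _ A

theorem IsUState.mem_of_predict {p : UState g} (hp : IsUState g E p) {A : Option g.NT}
    {α β : List (Symbol T g.NT)} {B : g.NT} (h : (A, α, Symbol.nonterminal B :: β) ∈ p.1)
    {r : ContextFreeRule T g.NT} (hr : r ∈ g.rules) (hin : r.input = B) :
    (some B, [], r.output) ∈ p.1 := by
  obtain ⟨σ, hσ, -⟩ := hp
  exact hσ.mem_of_predict h hr hin

theorem uNext_mem_popSet {p : UState g} (hp : IsUState g E p) {A : g.NT}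
    {α : List (Symbol T g.NT)} (h : (some A, [], α) ∈ p.1)
    (hne : next g p.1 (Symbol.nonterminal A) ≠ ∅) :
    uNext g E p (Symbol.nonterminal A) ∈ PopSet g E (uNextStar g E p α) := by
  have hα : (some A, [] ++ α, []) ∈ (uNextStar g E p α).1 :=
    mem_uNextStar_of_mem (by simpa using h)
  exact ⟨A, α, p, hp, by simpa using hα, h, rfl, hne, rfl⟩

theorem FPath.trans {p q r : UState g} {u v : List T} (h₁ : FPath g E p u q)
    (h₂ : FPath g E q v r) : FPath g E p (u ++ v) r := by
  induction h₁ with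
  | refl => exact h₂
  | shift hne _ ih => exact .shift hne (ih h₂)
  | eps hpop _ ih => exact .eps hpop (ih h₂)

theorem fPath_uNextStar {p : UState g} {A : Option g.NT} {α β : List (Symbol T g.NT)}
    {v : List T} (h : (A, α, v.map Symbol.terminal ++ β) ∈ p.1) :
    FPath g E p v (uNextStar g E p (v.map Symbol.terminal)) := by
  induction v generalizing p α with
  | nil => exact .refl p
  | cons x v ih =>
    have hx : (A, α ++ [Symbol.terminal x], v.map Symbol.terminal ++ β) ∈
        (uNext g E p (Symbol.terminal x)).1 :=
      mem_next_of_mem (by simpa using h)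
    exact .shift (next_ne_empty_of_mem hx) (ih hx)

theorem FPath.eq_nil_of_complete (hg : RightLinear g) {p q : UState g} {w : List T}
    (h : FPath g E p w q) (hp : ∀ d ∈ p.1, d.2.2 = []) : w = [] := by
  induction h with
  | refl => rfl
  | shift hne => exact absurd (next_eq_empty_of_complete hp _) hne
  | eps hpop _ ih =>
    obtain ⟨A, -, p'', hp'', -, -, -, -, rfl⟩ := hpop
    exact ih (complete_uNext_nonterminal hg hp'' A)

theorem FPath.derives (hg : RightLinear g) {p q : UState g} {w : List T} (h : FPath g E p w q)
    {u : List T} (hp : p.1 = nextStar g (start g) (u.map Symbol.terminal))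
    (hq : IsFinal g q.1) :
    g.Derives [Symbol.nonterminal g.initial] ((u ++ w).map Symbol.terminal) := by
  induction h generalizing u with
  | refl =>
    have hu := (validItem_of_mem_nextStar hg (hp ▸ hq)).eq_of_final
    cases u <;> simp at hu
  | @shift _ x _ _ _ _ ih =>
    simpa using ih (u := u ++ [x]) (by rw [List.map_append, nextStar_append, ← hp]; rfl) hq
  | eps hpop hrest _ =>
    obtain ⟨A, α, p'', hp'', hA, -, -, -, rfl⟩ := hpop
    rw [hrest.eq_nil_of_complete hg (complete_uNext_nonterminal hg hp'' A), List.append_nil]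
    exact (validItem_of_mem_nextStar hg (hp ▸ hA)).derives_of_complete

theorem mem_language_of_fAccepts (hg : RightLinear g) {w : List T} (hw : FAccepts g E w) :
    w ∈ g.language := by
  obtain ⟨q, hq, hpath⟩ := hw
  exact List.nil_append w ▸ hpath.derives hg (u := []) rfl hq

/-- A derivation `A ⇒ β₁ A₁ ⇒ β₁ β₂ A₂ ⇒ … ⇒ β₁ ⋯ βₙ₊₁`, recorded as its chain of rules. -/
inductive RightLinearDerives (g : CFGrammar T) : g.NT → List T → Prop
  | last {A : g.NT} {β : List T} (r : ContextFreeRule T g.NT) (hr : r ∈ g.rules)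
      (hin : r.input = A) (hout : r.output = β.map Symbol.terminal) : RightLinearDerives g A β
  | cons {A B : g.NT} {β w : List T} (r : ContextFreeRule T g.NT) (hr : r ∈ g.rules)
      (hin : r.input = A) (hout : r.output = β.map Symbol.terminal ++ [Symbol.nonterminal B])
      (h : RightLinearDerives g B w) : RightLinearDerives g A (β ++ w)

theorem RightLinear.derives_cases (hg : RightLinear g) {A : g.NT} {v : List (Symbol T g.NT)}
    (h : g.Derives [Symbol.nonterminal A] v) :
    (∃ u B, v = u.map Symbol.terminal ++ [Symbol.nonterminal B] ∧
      ∀ w, RightLinearDerives g B w → RightLinearDerives g A (u ++ w)) ∨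
    ∃ u, v = u.map Symbol.terminal ∧ RightLinearDerives g A u := by
  induction h with
  | refl => exact .inl ⟨[], A, rfl, fun _ h => h⟩
  | tail _ hstep ih =>
    obtain ⟨r, hr, hrw⟩ := hstep
    obtain ⟨p, q, rfl, rfl⟩ := hrw.exists_parts
    rcases ih with ⟨u, B, hv, hB⟩ | ⟨u, hv, -⟩
    · obtain ⟨rfl, hin, rfl⟩ := eq_map_terminal_of_append_cons_eq (by simpa using hv)
      rcases hg r hr with ⟨β, hβ⟩ | ⟨C, β, hβ⟩
      · exact .inr ⟨u ++ β, by simp [hβ], hB _ (.last r hr (Symbol.nonterminal.inj hin).symm hβ)⟩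
      · refine .inl ⟨u ++ β, C, by simp [hβ], fun w hw => ?_⟩
        simpa using hB _ (.cons r hr (Symbol.nonterminal.inj hin).symm hβ hw)
    · have hmem : Symbol.nonterminal r.input ∈ u.map (Symbol.terminal : T → Symbol T g.NT) := by
        simp [← hv]
      simp at hmem

theorem RightLinear.rightLinearDerives (hg : RightLinear g) {A : g.NT} {w : List T}
    (h : g.Derives [Symbol.nonterminal A] (w.map Symbol.terminal)) : RightLinearDerives g A w := by
  rcases hg.derives_cases h with ⟨u, B, hw, -⟩ | ⟨u, hw, hu⟩
  · have hB : Symbol.nonterminal B ∈ w.map (Symbol.terminal : T → Symbol T g.NT) := by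
      simp [hw]
    simp at hB
  · rwa [List.map_injective_iff.mpr (fun _ _ => Symbol.terminal.inj) hw]

/-- The flattening reads the terminals of each rule of the chain in turn, and then pops the
chain with ε-moves, innermost rule first. -/
theorem RightLinearDerives.fPath (hE : IsStackCongruence g E) {A : g.NT} {w : List T}
    (h : RightLinearDerives g A w) {p : UState g} (hp : IsUState g E p) {C : Option g.NT}
    {δ δ' : List (Symbol T g.NT)} (hA : (C, δ, Symbol.nonterminal A :: δ') ∈ p.1) :
    FPath g E p w (uNext g E p (Symbol.nonterminal A)) := by
  have hne := next_ne_empty_of_mem (mem_next_of_mem hA)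
  induction h generalizing p C δ δ' with
  | @last A β r hr hin hout =>
    have hitem : (some A, [], β.map Symbol.terminal ++ []) ∈ p.1 := by
      simpa [← hout] using hp.mem_of_predict hA hr hin
    have hread : FPath g E p β (uNextStar g E p (β.map Symbol.terminal)) := fPath_uNextStar hitem
    have hpop := uNext_mem_popSet hp (by simpa using hitem) hne
    simpa using hread.trans (.eps hpop (.refl _))
  | @cons A B β w r hr hin hout _ ih =>
    have hitem : (some A, [], β.map Symbol.terminal ++ [Symbol.nonterminal B]) ∈ p.1 :=
      hout ▸ hp.mem_of_predict hA hr hin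
    have hread : FPath g E p β (uNextStar g E p (β.map Symbol.terminal)) := fPath_uNextStar hitem
    have hB : (some A, β.map Symbol.terminal, [Symbol.nonterminal B]) ∈
        (uNextStar g E p (β.map Symbol.terminal)).1 := by
      simpa using mem_uNextStar_of_mem (E := E) hitem
    have hrest :=
      ih (isUState_uNextStar hE hp hitem) hB (next_ne_empty_of_mem (mem_next_of_mem hB))
    have hpop := uNext_mem_popSet hp hitem hne
    rw [uNextStar_append] at hpop
    simpa using hread.trans (hrest.trans (.eps hpop (.refl _)))

theorem fAccepts_of_mem_language (hg : RightLinear g) (hE : IsStackCongruence g E) {w : List T}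
    (hw : w ∈ g.language) : FAccepts g E w := by
  have hS : ((none : Option g.NT), [], [Symbol.nonterminal g.initial]) ∈ (uStart g E).1 :=
    Closure.base rfl
  exact ⟨uNext g E (uStart g E) (Symbol.nonterminal g.initial), mem_next_of_mem hS,
    (hg.rightLinearDerives hw).fPath hE isUState_uStart hS⟩

theorem fAccepts_iff_mem_language (hg : RightLinear g) (hE : IsStackCongruence g E)
    (w : List T) : FAccepts g E w ↔ w ∈ g.language :=
  ⟨mem_language_of_fAccepts hg, fAccepts_of_mem_language hg hE⟩

theorem isStackCongruence_coarsest (g : CFGrammar T) :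
    IsStackCongruence g fun s σ σ' => Stacks g s σ ∧ Stacks g s σ' :=
  ⟨fun _ _ _ h => h, fun _ _ h => ⟨h, h⟩, fun _ _ _ h => h.symm,
    fun _ _ _ _ h₁ h₂ => ⟨h₁.1, h₂.2⟩, fun _ _ _ _ hne h => ⟨h.1.snoc hne, h.2.snoc hne⟩⟩

end LRApprox

open LRApprox

/-- For a right-linear CFG `G`, for any stack congruence `≡`
on `R(G)` the flattening `F_≡` accepts exactly `L(G)`; in particular the
flattening of `R(G)` itself (the trivial coarsest congruence, i.e. no
unfolding) accepts exactly `L(G)`. -/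
theorem right_linear_flattening_exact {T : Type*} (g : CFGrammar T)
    (hg : RightLinear g) :
    (∀ E : LRState g → Stack g → Stack g → Prop, IsStackCongruence g E →
      ∀ w : List T, FAccepts g E w ↔ w ∈ g.language) ∧
    (∀ w : List T,
      FAccepts g (fun s σ σ' => Stacks g s σ ∧ Stacks g s σ') w ↔
        w ∈ g.language) :=
  ⟨fun _ hE => fAccepts_iff_mem_language hg hE,
    fAccepts_iff_mem_language hg (isStackCongruence_coarsest g)⟩
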